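/- arXiv:2402.14160 — 2 statements merged into one kernel-verified Lean document; each statement's English description precedes it below -/
import Mathlib

section
/- Recursive rejection sampling with draft tokens sampled without replacement recovers the target distribution: if p is a probability distribution on 𝒳 with full support, 1 ≤ K ≤ |𝒳|, and the draft kernels are the sampling-without-replacement kernels derived from p, then the output Z of recursive rejection sampling satisfies Pr{Z = z} = q(z) for every z ∈ 𝒳 and every target probability distribution q on 𝒳. -/
/-!
Condition on the drafts made before round `m`; write `P` for the round-`m` draft kernel and `Q`
for the current residual target `q^(m+1)`. The draft `t` is output with probability
`min (P t) (Q t)`, and the total rejection probability is `∑ (Q - P)⁺`, the mass of the next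
residual `Norm[(Q - P)⁺]`. Hence if the later rounds output an exact sample of that residual,
round `m` outputs an exact sample of `Q`. The final fallback draw is exact by construction, so
backward induction over the rounds gives the claim. Drafting without replacement only serves to
keep the kernels genuine distributions: almost surely the drafted history stays injective, and on
injective histories the kernels are renormalized restrictions of `p`.
-/

open scoped BigOperators Classical

/-- A probability distribution on a finite alphabet. -/
def IsProbDist {X : Type*} [Fintype X] (p : X → ℝ) : Prop :=
  (∀ x, 0 ≤ p x) ∧ ∑ x, p x = 1

/-- `Norm` with a default distribution `d`, used when `f` is identically zero. -/
noncomputable def normOr {X : Type*} [Fintype X] (d f : X → ℝ) : X → ℝ :=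
  if ∀ x, f x = 0 then d else fun x => f x / ∑ x', f x'

/-- Acceptance probability `min {1, qv / pv}`, interpreted as `1` when `pv = 0`. -/
noncomputable def accProb (pv qv : ℝ) : ℝ :=
  if pv = 0 then 1 else min 1 (qv / pv)

/-- Residual distributions: `Qres K q pdraft d m` is `q^{(m+1)}` (it is fed the whole draft
tuple for convenience; it only depends on the first `m - 1` coordinates). -/
noncomputable def Qres {X : Type*} [Fintype X] (K : ℕ) (q : X → ℝ)
    (pdraft : (k : Fin K) → (Fin (k : ℕ) → X) → X → ℝ) (d : X → ℝ) :
    ℕ → (Fin K → X) → X → ℝ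
  | 0, _, t => q t
  | m + 1, x, t =>
    if hm : m < K then
      normOr d (fun s =>
        max 0 (Qres K q pdraft d m x s -
          pdraft ⟨m, hm⟩ (fun j => x (Fin.castLE hm.le j)) s)) t
    else d t

/-- Probability that the draft process produces the tuple `x` of draft tokens. -/
noncomputable def trajProb {X : Type*} [Fintype X] (K : ℕ)
    (pdraft : (k : Fin K) → (Fin (k : ℕ) → X) → X → ℝ) (x : Fin K → X) : ℝ :=
  ∏ k : Fin K, pdraft k (fun j => x (Fin.castLE k.isLt.le j)) (x k)

/-- Conditional acceptance probability of the `m`-th draft (0-indexed), given the drafts. -/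
noncomputable def thetaN {X : Type*} [Fintype X] (K : ℕ) (q : X → ℝ)
    (pdraft : (k : Fin K) → (Fin (k : ℕ) → X) → X → ℝ) (d : X → ℝ)
    (m : ℕ) (x : Fin K → X) : ℝ :=
  if hm : m < K then
    accProb (pdraft ⟨m, hm⟩ (fun j => x (Fin.castLE hm.le j)) (x ⟨m, hm⟩))
      (Qres K q pdraft d m x (x ⟨m, hm⟩))
  else 0

/-- The law of the output `Z` of recursive rejection sampling: sum over draft tuples of the
probability of the tuple times the conditional probability that the output equals `z`
(first acceptance at round `k` outputs the `k`-th draft; if every draft is rejected the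
output is drawn from the last residual distribution `q^{(K+1)}`). -/
noncomputable def rrsLaw {X : Type*} [Fintype X] (K : ℕ) (q : X → ℝ)
    (pdraft : (k : Fin K) → (Fin (k : ℕ) → X) → X → ℝ) (d : X → ℝ) (z : X) : ℝ :=
  ∑ x : Fin K → X, trajProb K pdraft x *
    ((∑ k : Fin K,
        (∏ j ∈ Finset.range (k : ℕ), (1 - thetaN K q pdraft d j x)) *
          thetaN K q pdraft d (k : ℕ) x * (if x k = z then 1 else 0)) +
      (∏ j ∈ Finset.range K, (1 - thetaN K q pdraft d j x)) *
        Qres K q pdraft d K x z)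

open Finset Function

section Distributions
variable {X : Type*} [Fintype X]

theorem sum_ne_zero_iff_of_nonneg {f : X → ℝ} (hf : ∀ x, 0 ≤ f x) :
    ∑ x, f x ≠ 0 ↔ ¬∀ x, f x = 0 := by
  simp [sum_eq_zero_iff_of_nonneg fun x _ => hf x]

theorem IsProbDist.normOr {d : X → ℝ} (hd : IsProbDist d) {f : X → ℝ} (hf : ∀ x, 0 ≤ f x) :
    IsProbDist (normOr d f) := by
  unfold _root_.normOr
  split_ifs with h
  · exact hd
  · have hS : 0 < ∑ x, f x :=
      (sum_nonneg fun x _ => hf x).lt_of_ne' ((sum_ne_zero_iff_of_nonneg hf).2 h)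
    exact ⟨fun x => div_nonneg (hf x) hS.le, by rw [← sum_div, div_self hS.ne']⟩

theorem sum_mul_normOr (d : X → ℝ) {f : X → ℝ} (hf : ∀ x, 0 ≤ f x) (z : X) :
    (∑ x, f x) * normOr d f z = f z := by
  unfold normOr
  split_ifs with h
  · simp [h]
  · exact mul_div_cancel₀ _ ((sum_ne_zero_iff_of_nonneg hf).2 h)

theorem mul_accProb {pv qv : ℝ} (hp : 0 ≤ pv) (hq : 0 ≤ qv) :
    pv * accProb pv qv = min pv qv := by
  unfold accProb
  split_ifs with h
  · simp [h, hq]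
  · rw [mul_min_of_nonneg _ _ hp, mul_one, mul_div_cancel₀ _ h]

theorem min_add_max_zero_sub (a b : ℝ) : min a b + max 0 (b - a) = b := by
  rcases le_total a b with h | h
  · rw [min_eq_left h, max_eq_right (sub_nonneg.2 h)]; ring
  · rw [min_eq_right h, max_eq_left (sub_nonpos.2 h)]; ring

theorem sum_mul_accProb_add_normOr_eq {P Q : X → ℝ} (hP : IsProbDist P) (hQ : IsProbDist Q)
    (d : X → ℝ) (z : X) :
    ∑ t, P t * (accProb (P t) (Q t) * (if t = z then 1 else 0) +
      (1 - accProb (P t) (Q t)) * normOr d (fun s => max 0 (Q s - P s)) z) = Q z := by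
  set R := normOr d (fun s => max 0 (Q s - P s)) z
  have hrejected : ∑ t, (P t - min (P t) (Q t)) = ∑ t, max 0 (Q t - P t) := by
    have h : ∀ t, P t - min (P t) (Q t) = max 0 (Q t - P t) + (P t - Q t) := fun t => by
      linarith [min_add_max_zero_sub (P t) (Q t)]
    rw [sum_congr rfl fun t _ => h t, sum_add_distrib, sum_sub_distrib, hP.2, hQ.2, sub_self,
      add_zero]
  calc _ = ∑ t, min (P t) (Q t) * (if t = z then 1 else 0) +
        (∑ t, (P t - min (P t) (Q t))) * R := by
        rw [sum_mul, ← sum_add_distrib]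
        refine sum_congr rfl fun t _ => ?_
        rw [← mul_accProb (hP.1 t) (hQ.1 t)]
        ring
    _ = min (P z) (Q z) + max 0 (Q z - P z) := by
        rw [hrejected, sum_mul_normOr d (fun _ => le_max_left _ _)]
        simp
    _ = Q z := min_add_max_zero_sub (P z) (Q z)

theorem isProbDist_renormalize_compl {p : X → ℝ} (hp : IsProbDist p) (hppos : ∀ x, 0 < p x)
    {s : Finset X} (hs : s ≠ univ) :
    IsProbDist fun t => (if t ∈ s then 0 else p t) / (1 - ∑ t ∈ s, p t) := by
  have hmass : ∑ t, (if t ∈ s then 0 else p t) = 1 - ∑ t ∈ s, p t := by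
    rw [← hp.2, ← sum_compl_add_sum s p, add_sub_cancel_right, sum_ite, sum_const_zero, zero_add]
    congr 1; ext t; simp
  have hpos : 0 < 1 - ∑ t ∈ s, p t := by
    obtain ⟨t, ht⟩ : ∃ t, t ∉ s := by
      by_contra! h
      exact hs (eq_univ_iff_forall.2 h)
    rw [← hmass]
    exact sum_pos' (fun t _ => by split_ifs <;> simp [(hppos t).le])
      ⟨t, mem_univ t, by simp [ht, hppos]⟩
  refine ⟨fun t => div_nonneg ?_ hpos.le, by rw [← sum_div, hmass, div_self hpos.ne']⟩
  split_ifs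
  exacts [le_rfl, (hppos t).le]

theorem isProbDist_withoutReplacement {p : X → ℝ} (hp : IsProbDist p) (hppos : ∀ x, 0 < p x)
    {m : ℕ} (hm : m < Fintype.card X) {h : Fin m → X} (hinj : Injective h) :
    IsProbDist fun t => (if ∃ j, h j = t then 0 else p t) / (1 - ∑ j, p (h j)) := by
  have hs : univ.image h ≠ univ := fun heq => by
    have := congrArg card heq
    rw [card_image_of_injective _ hinj, card_univ, card_univ, Fintype.card_fin] at this
    omega
  convert isProbDist_renormalize_compl hp hppos hs using 4 with t
  · simp
  · rw [sum_image fun a _ b _ hab => hinj hab]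

end Distributions

section Tuples
variable {X : Type*} {K m : ℕ} {pdraft : (k : Fin K) → (Fin (k : ℕ) → X) → X → ℝ}

noncomputable def extensions [Fintype X] (m : ℕ) (x : Fin K → X) : Finset (Fin K → X) :=
  univ.filter fun y => Set.EqOn y x {i | (i : ℕ) < m}

theorem mem_extensions [Fintype X] {x y : Fin K → X} :
    y ∈ extensions m x ↔ Set.EqOn y x {i | (i : ℕ) < m} := by
  simp [extensions]

theorem extensions_zero [Fintype X] (x : Fin K → X) : extensions 0 x = univ := by
  ext y
  simp [mem_extensions, Set.EqOn]

theorem extensions_self [Fintype X] (x : Fin K → X) : extensions K x = {x} := by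
  ext y
  simp [mem_extensions, Set.EqOn, funext_iff]

theorem setOf_lt_succ (hm : m < K) :
    {i : Fin K | (i : ℕ) < m + 1} = insert (⟨m, hm⟩ : Fin K) {i : Fin K | (i : ℕ) < m} := by
  ext i
  simp [Fin.ext_iff]
  omega

theorem eqOn_update_lt (hm : m < K) (x : Fin K → X) (t : X) :
    Set.EqOn (update x ⟨m, hm⟩ t) x {i | (i : ℕ) < m} := fun i hi =>
  update_of_ne (by rintro rfl; simp at hi) t x

theorem filter_extensions_apply_eq [Fintype X] (hm : m < K) (x : Fin K → X) (t : X) :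
    (extensions m x).filter (fun y => y ⟨m, hm⟩ = t) =
      extensions (m + 1) (update x ⟨m, hm⟩ t) := by
  have hagree := eqOn_update_lt hm x t
  ext y
  simp only [mem_filter, mem_extensions, setOf_lt_succ hm, Set.insert_eq, Set.eqOn_union,
    Set.eqOn_singleton, update_self]
  exact ⟨fun ⟨h, ht⟩ => ⟨ht, h.trans hagree.symm⟩, fun ⟨ht, h⟩ => ⟨h.trans hagree, ht⟩⟩

theorem castLE_comp_eq_of_eqOn (h : m ≤ K) {x y : Fin K → X}
    (hxy : Set.EqOn y x {i | (i : ℕ) < m}) :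
    (fun j : Fin m => y (Fin.castLE h j)) = fun j => x (Fin.castLE h j) :=
  funext fun j => hxy (by simp)

theorem injective_castLE_comp_of_injOn (h : m ≤ K) {x : Fin K → X}
    (hx : Set.InjOn x {i | (i : ℕ) < m}) : Injective fun j : Fin m => x (Fin.castLE h j) :=
  fun _ _ hab => Fin.castLE_injective h (hx (by simp) (by simp) hab)

theorem injOn_update_lt_succ (hm : m < K) {x : Fin K → X} (hx : Set.InjOn x {i | (i : ℕ) < m})
    {t : X} (ht : ∀ i : Fin K, (i : ℕ) < m → x i ≠ t) :
    Set.InjOn (update x ⟨m, hm⟩ t) {i | (i : ℕ) < m + 1} := by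
  have hagree := eqOn_update_lt hm x t
  rw [setOf_lt_succ hm, Set.injOn_insert (by simp), update_self, hagree.image_eq]
  exact ⟨hx.congr hagree.symm, by rintro ⟨i, hi, rfl⟩; exact ht i hi rfl⟩

variable (pdraft) in
noncomputable def weightFrom (m : ℕ) (x : Fin K → X) : ℝ :=
  ∏ k : Fin K, if m ≤ (k : ℕ) then pdraft k (fun j => x (Fin.castLE k.isLt.le j)) (x k) else 1

theorem weightFrom_zero [Fintype X] (x : Fin K → X) :
    weightFrom pdraft 0 x = trajProb K pdraft x := by
  simp [weightFrom, trajProb]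

theorem weightFrom_self (x : Fin K → X) : weightFrom pdraft K x = 1 :=
  prod_eq_one fun k _ => if_neg (by omega)

theorem weightFrom_of_lt (hm : m < K) (x : Fin K → X) :
    weightFrom pdraft m x =
      pdraft ⟨m, hm⟩ (fun j => x (Fin.castLE hm.le j)) (x ⟨m, hm⟩) *
        weightFrom pdraft (m + 1) x := by
  set g : Fin K → ℝ := fun k => pdraft k (fun j => x (Fin.castLE k.isLt.le j)) (x k)
  have h : ∀ k : Fin K, (if m ≤ (k : ℕ) then g k else 1) =
      (if k = ⟨m, hm⟩ then g k else 1) * (if m + 1 ≤ (k : ℕ) then g k else 1) := fun k => by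
    by_cases hk : k = ⟨m, hm⟩
    · subst hk; simp
    · have : (k : ℕ) ≠ m := fun h => hk (Fin.ext h)
      by_cases hmk : m ≤ (k : ℕ) <;> simp [hk, hmk, show m + 1 ≤ (k : ℕ) ↔ m ≤ k by omega]
  rw [weightFrom, prod_congr rfl fun k _ => h k, prod_mul_distrib, prod_ite_eq']
  simp [g, weightFrom]

theorem sum_extensions_weightFrom_mul [Fintype X] (hm : m < K) (x : Fin K → X)
    (f : (Fin K → X) → ℝ) :
    ∑ y ∈ extensions m x, weightFrom pdraft m y * f y =
      ∑ t, pdraft ⟨m, hm⟩ (fun j => x (Fin.castLE hm.le j)) t *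
        ∑ y ∈ extensions (m + 1) (update x ⟨m, hm⟩ t), weightFrom pdraft (m + 1) y * f y := by
  rw [← sum_fiberwise (extensions m x) (fun y => y ⟨m, hm⟩)]
  refine sum_congr rfl fun t _ => ?_
  rw [filter_extensions_apply_eq hm, mul_sum]
  refine sum_congr rfl fun y hy => ?_
  rw [← filter_extensions_apply_eq hm, mem_filter, mem_extensions] at hy
  rw [weightFrom_of_lt hm, castLE_comp_eq_of_eqOn hm.le hy.1, hy.2, mul_assoc]

theorem injOn_update_of_pdraft_ne_zero
    (hfresh : ∀ (k : Fin K) (h : Fin k → X), Injective h → ∀ j, pdraft k h (h j) = 0)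
    (hm : m < K) {x : Fin K → X} (hx : Set.InjOn x {i | (i : ℕ) < m}) {t : X}
    (ht : pdraft ⟨m, hm⟩ (fun j => x (Fin.castLE hm.le j)) t ≠ 0) :
    Set.InjOn (update x ⟨m, hm⟩ t) {i | (i : ℕ) < m + 1} :=
  injOn_update_lt_succ hm hx fun i hi hxi =>
    ht (hxi ▸ hfresh _ _ (injective_castLE_comp_of_injOn hm.le hx) ⟨i, hi⟩)

end Tuples

section RecursiveRejectionSampling
variable {X : Type*} [Fintype X] {K m : ℕ} {q : X → ℝ}
  {pdraft : (k : Fin K) → (Fin (k : ℕ) → X) → X → ℝ} {d : X → ℝ}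

theorem Qres_succ (hm : m < K) (x : Fin K → X) :
    Qres K q pdraft d (m + 1) x = normOr d fun s =>
      max 0 (Qres K q pdraft d m x s - pdraft ⟨m, hm⟩ (fun j => x (Fin.castLE hm.le j)) s) := by
  ext t
  rw [Qres, dif_pos hm]

theorem Qres_congr {x x' : Fin K → X} (h : Set.EqOn x x' {i | (i : ℕ) < m}) :
    Qres K q pdraft d m x = Qres K q pdraft d m x' := by
  induction m with
  | zero => rfl
  | succ m ih =>
    by_cases hm : m < K
    · have h' : Set.EqOn x x' {i | (i : ℕ) < m} := h.mono fun i (hi : (i : ℕ) < m) => by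
        simp only [Set.mem_ofPred_eq]; omega
      rw [Qres_succ hm, Qres_succ hm, ih h', castLE_comp_eq_of_eqOn hm.le h']
    · ext t
      simp [Qres, hm]

theorem isProbDist_Qres (hq : IsProbDist q) (hd : IsProbDist d) (m : ℕ) (x : Fin K → X) :
    IsProbDist (Qres K q pdraft d m x) := by
  induction m with
  | zero => exact hq
  | succ m ih =>
    by_cases hm : m < K
    · rw [Qres_succ hm]
      exact hd.normOr fun _ => le_max_left _ _
    · convert hd using 1
      ext t
      simp [Qres, hm]

theorem thetaN_of_lt (hm : m < K) (x : Fin K → X) :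
    thetaN K q pdraft d m x =
      accProb (pdraft ⟨m, hm⟩ (fun j => x (Fin.castLE hm.le j)) (x ⟨m, hm⟩))
        (Qres K q pdraft d m x (x ⟨m, hm⟩)) :=
  dif_pos hm

variable (K q pdraft d) in
/-- The conditional law of the output given the drafts `x`, once rounds `0, …, m - 1` have
rejected. -/
noncomputable def outputLawFrom (m : ℕ) (x : Fin K → X) (z : X) : ℝ :=
  (∑ k : Fin K, if m ≤ (k : ℕ) then
      (∏ j ∈ Ico m k, (1 - thetaN K q pdraft d j x)) * thetaN K q pdraft d k x *
        (if x k = z then 1 else 0)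
    else 0) +
  (∏ j ∈ Ico m K, (1 - thetaN K q pdraft d j x)) * Qres K q pdraft d K x z

theorem rrsLaw_eq_sum_weightFrom_mul (z : X) :
    rrsLaw K q pdraft d z = ∑ x, weightFrom pdraft 0 x * outputLawFrom K q pdraft d 0 x z := by
  unfold rrsLaw
  refine Finset.sum_congr rfl fun x _ => ?_
  simp only [weightFrom_zero, outputLawFrom, range_eq_Ico, Nat.zero_le, if_true]

theorem outputLawFrom_self (x : Fin K → X) (z : X) :
    outputLawFrom K q pdraft d K x z = Qres K q pdraft d K x z := by
  simp [outputLawFrom, fun k : Fin K => not_le.2 k.isLt]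

theorem outputLawFrom_of_lt (hm : m < K) (x : Fin K → X) (z : X) :
    outputLawFrom K q pdraft d m x z =
      thetaN K q pdraft d m x * (if x ⟨m, hm⟩ = z then 1 else 0) +
        (1 - thetaN K q pdraft d m x) * outputLawFrom K q pdraft d (m + 1) x z := by
  set θ : ℕ → ℝ := fun j => thetaN K q pdraft d j x
  have h : ∀ k : Fin K,
      (if m ≤ (k : ℕ) then (∏ j ∈ Ico m k, (1 - θ j)) * θ k * (if x k = z then 1 else 0) else 0) =
        (if k = ⟨m, hm⟩ then θ m * (if x ⟨m, hm⟩ = z then 1 else 0) else 0) +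
          (1 - θ m) * (if m + 1 ≤ (k : ℕ) then
            (∏ j ∈ Ico (m + 1) k, (1 - θ j)) * θ k * (if x k = z then 1 else 0) else 0) := by
    intro k
    by_cases hk : k = ⟨m, hm⟩
    · subst hk; simp
    · have hkm : (k : ℕ) ≠ m := fun h => hk (Fin.ext h)
      by_cases hmk : m ≤ (k : ℕ)
      · rw [if_pos hmk, if_neg hk, if_pos (show m + 1 ≤ (k : ℕ) by omega),
          prod_eq_prod_Ico_succ_bot (by omega)]
        ring
      · rw [if_neg hmk, if_neg hk, if_neg (show ¬m + 1 ≤ (k : ℕ) by omega)]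
        ring
  rw [outputLawFrom, outputLawFrom, sum_congr rfl fun k _ => h k, sum_add_distrib,
    sum_ite_eq' univ, if_pos (mem_univ _), ← mul_sum, prod_eq_prod_Ico_succ_bot hm]
  ring

theorem sum_outputLawFrom (hq : IsProbDist q) (hd : IsProbDist d) (hmK : m ≤ K)
    (x : Fin K → X) : ∑ z, outputLawFrom K q pdraft d m x z = 1 := by
  induction hmK using Nat.decreasingInduction with
  | self => simp only [outputLawFrom_self, (isProbDist_Qres hq hd K x).2]
  | of_succ m hm ih =>
    simp only [outputLawFrom_of_lt hm, sum_add_distrib, ← mul_sum, ih]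
    simp

theorem Qres_succ_update (hm : m < K) (x : Fin K → X) (t : X) :
    Qres K q pdraft d (m + 1) (update x ⟨m, hm⟩ t) = normOr d fun s =>
      max 0 (Qres K q pdraft d m x s - pdraft ⟨m, hm⟩ (fun j => x (Fin.castLE hm.le j)) s) := by
  rw [Qres_succ hm, castLE_comp_eq_of_eqOn hm.le (eqOn_update_lt hm x t),
    Qres_congr (eqOn_update_lt hm x t)]

theorem outputLawFrom_of_mem_extensions_update (hm : m < K) {x y : Fin K → X} {t : X}
    (hy : y ∈ extensions (m + 1) (update x ⟨m, hm⟩ t)) (z : X) :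
    outputLawFrom K q pdraft d m y z =
      accProb (pdraft ⟨m, hm⟩ (fun j => x (Fin.castLE hm.le j)) t) (Qres K q pdraft d m x t) *
          (if t = z then 1 else 0) +
        (1 - accProb (pdraft ⟨m, hm⟩ (fun j => x (Fin.castLE hm.le j)) t)
          (Qres K q pdraft d m x t)) * outputLawFrom K q pdraft d (m + 1) y z := by
  rw [← filter_extensions_apply_eq hm, mem_filter, mem_extensions] at hy
  rw [outputLawFrom_of_lt hm, thetaN_of_lt hm, castLE_comp_eq_of_eqOn hm.le hy.1, hy.2,
    Qres_congr hy.1]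

/-- Sum `h` over `z`, using that every output law is a distribution. -/
theorem sum_extensions_weightFrom_eq_one (hq : IsProbDist q) (hd : IsProbDist d) (hmK : m ≤ K)
    {x : Fin K → X} (h : ∀ z, ∑ y ∈ extensions m x,
      weightFrom pdraft m y * outputLawFrom K q pdraft d m y z = Qres K q pdraft d m x z) :
    ∑ y ∈ extensions m x, weightFrom pdraft m y = 1 := by
  calc ∑ y ∈ extensions m x, weightFrom pdraft m y
      = ∑ y ∈ extensions m x, weightFrom pdraft m y * ∑ z, outputLawFrom K q pdraft d m y z := by
        simp [sum_outputLawFrom hq hd hmK]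
    _ = ∑ z, Qres K q pdraft d m x z := by
        simp_rw [mul_sum, ← h]
        exact sum_comm
    _ = 1 := (isProbDist_Qres hq hd m x).2

theorem sum_extensions_weightFrom_mul_outputLawFrom
    (hdist : ∀ (k : Fin K) (h : Fin k → X), Injective h → IsProbDist (pdraft k h))
    (hfresh : ∀ (k : Fin K) (h : Fin k → X), Injective h → ∀ j, pdraft k h (h j) = 0)
    (hq : IsProbDist q) (hd : IsProbDist d) (hmK : m ≤ K) {x : Fin K → X}
    (hx : Set.InjOn x {i | (i : ℕ) < m}) (z : X) :
    ∑ y ∈ extensions m x, weightFrom pdraft m y * outputLawFrom K q pdraft d m y z =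
      Qres K q pdraft d m x z := by
  induction hmK using Nat.decreasingInduction generalizing x z with
  | self => rw [extensions_self, sum_singleton, weightFrom_self, outputLawFrom_self, one_mul]
  | of_succ m hm ih =>
    rw [sum_extensions_weightFrom_mul hm]
    set P := pdraft ⟨m, hm⟩ (fun j => x (Fin.castLE hm.le j))
    have hP : IsProbDist P := hdist _ _ (injective_castLE_comp_of_injOn hm.le hx)
    rw [← sum_mul_accProb_add_normOr_eq hP (isProbDist_Qres hq hd m x) d z]
    refine sum_congr rfl fun t _ => ?_
    rcases eq_or_ne (P t) 0 with hPt | hPt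
    · rw [hPt, zero_mul, zero_mul]
    have hx' := injOn_update_of_pdraft_ne_zero hfresh hm hx hPt
    set a := accProb (P t) (Qres K q pdraft d m x t)
    congr 1
    calc ∑ y ∈ extensions (m + 1) (update x ⟨m, hm⟩ t),
          weightFrom pdraft (m + 1) y * outputLawFrom K q pdraft d m y z
        = ∑ y ∈ extensions (m + 1) (update x ⟨m, hm⟩ t),
            (a * (if t = z then 1 else 0) * weightFrom pdraft (m + 1) y +
              (1 - a) * (weightFrom pdraft (m + 1) y * outputLawFrom K q pdraft d (m + 1) y z)) :=
          sum_congr rfl fun y hy => by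
            rw [outputLawFrom_of_mem_extensions_update hm hy]
            ring
      _ = a * (if t = z then 1 else 0) +
            (1 - a) * Qres K q pdraft d (m + 1) (update x ⟨m, hm⟩ t) z := by
          rw [sum_add_distrib, ← mul_sum, ← mul_sum, ih hx' z,
            sum_extensions_weightFrom_eq_one hq hd hm (ih hx'), mul_one]
      _ = _ := by rw [Qres_succ_update]

theorem rrsLaw_eq_of_withoutReplacement
    (hdist : ∀ (k : Fin K) (h : Fin k → X), Injective h → IsProbDist (pdraft k h))
    (hfresh : ∀ (k : Fin K) (h : Fin k → X), Injective h → ∀ j, pdraft k h (h j) = 0)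
    (hq : IsProbDist q) (hd : IsProbDist d) (z : X) :
    rrsLaw K q pdraft d z = q z := by
  have h := sum_extensions_weightFrom_mul_outputLawFrom hdist hfresh hq hd (Nat.zero_le K)
    (x := fun _ => z) (by simp) z
  rwa [extensions_zero, ← rrsLaw_eq_sum_weightFrom_mul] at h

end RecursiveRejectionSampling

theorem rrs_swor_recovers_target_general {X : Type*} [Fintype X]
    (p : X → ℝ) (hp : IsProbDist p) (hppos : ∀ x, 0 < p x)
    (K : ℕ) (hK2 : K ≤ Fintype.card X)
    (pdraft : (k : Fin K) → (Fin (k : ℕ) → X) → X → ℝ)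
    (hker : ∀ (k : Fin K) (h : Fin (k : ℕ) → X), Function.Injective h →
      ∀ x, pdraft k h x = (if ∃ j, h j = x then 0 else p x) / (1 - ∑ j, p (h j)))
    (d : X → ℝ) (hd : IsProbDist d)
    (q : X → ℝ) (hq : IsProbDist q) (z : X) :
    rrsLaw K q pdraft d z = q z := by
  refine rrsLaw_eq_of_withoutReplacement (fun k h hinj => ?_) (fun k h hinj j => ?_) hq hd z
  · rw [funext (hker k h hinj)]
    exact isProbDist_withoutReplacement hp hppos (k.isLt.trans_le hK2) hinj
  · rw [hker k h hinj, if_pos ⟨j, rfl⟩, zero_div]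

/-- **Recursive rejection sampling with draft tokens sampled without replacement recovers the
target distribution.**  The draft kernels agree with the sampling-without-replacement kernels
derived from the full-support distribution `p` on injective histories (and are arbitrary on
histories with repeated tokens, which occur with probability 0). -/
theorem rrs_swor_recovers_target {X : Type*} [Fintype X] [Nonempty X]
    (p : X → ℝ) (hp : IsProbDist p) (hppos : ∀ x, 0 < p x)
    (K : ℕ) (hK1 : 1 ≤ K) (hK2 : K ≤ Fintype.card X)
    (pdraft : (k : Fin K) → (Fin (k : ℕ) → X) → X → ℝ)
    (hker : ∀ (k : Fin K) (h : Fin (k : ℕ) → X), Function.Injective h →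
      ∀ x, pdraft k h x = (if ∃ j, h j = x then 0 else p x) / (1 - ∑ j, p (h j)))
    (d : X → ℝ) (hd : IsProbDist d)
    (q : X → ℝ) (hq : IsProbDist q) (z : X) :
    rrsLaw K q pdraft d z = q z :=
  rrs_swor_recovers_target_general p hp hppos K hK2 pdraft hker d hd q hq z
end

section
/- Gumbel perturbation induces the Plackett–Luce ordering: let 𝒳 be a finite nonempty set with |𝒳| = n, w : 𝒳 → (0,∞), and let (G_x)_{x∈𝒳} be independent standard Gumbel random variables. Then almost surely the values log w(x) + G_x are pairwise distinct, and for every enumeration (x_1,…,x_n) of 𝒳, Pr{log w(x_1) + G_{x_1} > log w(x_2) + G_{x_2} > ⋯ > log w(x_n) + G_{x_n}} = ∏_{i=1}^{n} w(x_i) / (Σ_{j=i}^{n} w(x_j)). -/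
/-!
Put `Y x = log (w x) + G x`, so that `P (Y x ≤ t) = F_{w x} t` with `F_c t = exp (-c e^{-t})`.
Since `F_c F_d = F_{c+d}`, the density of `F_d` times `F_b` is `d / (d + b)` times the density
of `F_{d+b}`, hence `∫_{a < s} F_b(a) dF_d(a) = d / (d + b) · F_{d+b}(s)`. Conditioning on the
largest value `Y x₁ = a` and inducting on `n` therefore gives
`P (s > Y x₁ > ⋯ > Y xₙ) = (∏ᵢ w xᵢ / ∑_{j ≥ i} w xⱼ) · F_{∑ w}(s)`,
and letting `s → ∞` gives the Plackett–Luce probability. Ties have probability zero since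
the `Y x` are independent with atomless laws.
-/

open scoped BigOperators
open MeasureTheory

def IsStdGumbel {Ω : Type*} [MeasurableSpace Ω] (μ : Measure Ω) (g : Ω → ℝ) : Prop :=
  Measurable g ∧ ∀ t : ℝ, (μ {ω | g ω ≤ t}).toReal = Real.exp (-Real.exp (-t))

open Set Filter Topology ProbabilityTheory

noncomputable section

/-- The distribution function of `log c + G` for a standard Gumbel variable `G`. -/
def gumbelCDF (c s : ℝ) : ℝ := Real.exp (-(c * Real.exp (-s)))

def gumbelPDF (c s : ℝ) : ℝ := c * Real.exp (-s) * gumbelCDF c s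

def gumbelMeasure (c : ℝ) : Measure ℝ :=
  volume.withDensity fun s => ENNReal.ofReal (gumbelPDF c s)

instance (c : ℝ) : SigmaFinite (gumbelMeasure c) :=
  SigmaFinite.withDensity_of_ne_top' fun _ => ENNReal.ofReal_ne_top

instance (c : ℝ) : NullSingletonClass (gumbelMeasure c) := by
  unfold gumbelMeasure; infer_instance

lemma gumbelCDF_nonneg (c s : ℝ) : 0 ≤ gumbelCDF c s := (Real.exp_pos _).le

lemma gumbelCDF_mul_gumbelCDF (c d s : ℝ) :
    gumbelCDF c s * gumbelCDF d s = gumbelCDF (c + d) s := by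
  simp only [gumbelCDF, ← Real.exp_add]
  ring_nf

lemma gumbelCDF_zero (s : ℝ) : gumbelCDF 0 s = 1 := by simp [gumbelCDF]

lemma hasDerivAt_gumbelCDF (c s : ℝ) : HasDerivAt (gumbelCDF c) (gumbelPDF c s) s := by
  have h := (((Real.hasDerivAt_exp (-s)).comp s (hasDerivAt_neg s)).const_mul c).neg.exp
  convert h using 1
  · rfl
  · simp only [gumbelPDF, gumbelCDF, Pi.neg_apply, Function.comp_apply]
    ring

lemma continuous_gumbelCDF (c : ℝ) : Continuous (gumbelCDF c) := by
  unfold gumbelCDF; fun_prop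

lemma continuous_gumbelPDF (c : ℝ) : Continuous (gumbelPDF c) := by
  unfold gumbelPDF gumbelCDF; fun_prop

lemma gumbelPDF_nonneg {c : ℝ} (hc : 0 ≤ c) (s : ℝ) : 0 ≤ gumbelPDF c s := by
  unfold gumbelPDF gumbelCDF; positivity

lemma tendsto_gumbelCDF_atTop (c : ℝ) : Tendsto (gumbelCDF c) atTop (𝓝 1) := by
  have h : Tendsto (fun s => -(c * Real.exp (-s))) atTop (𝓝 0) := by
    simpa using ((Real.tendsto_exp_atBot.comp tendsto_neg_atTop_atBot).const_mul c).neg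
  rw [← Real.exp_zero]
  exact (Real.continuous_exp.tendsto 0).comp h

lemma tendsto_gumbelCDF_atBot {c : ℝ} (hc : 0 < c) : Tendsto (gumbelCDF c) atBot (𝓝 0) :=
  Real.tendsto_exp_atBot.comp <| tendsto_neg_atTop_atBot.comp <|
    (Real.tendsto_exp_atTop.comp tendsto_neg_atBot_atTop).const_mul_atTop hc

lemma integral_gumbelPDF (c a b : ℝ) :
    ∫ s in a..b, gumbelPDF c s = gumbelCDF c b - gumbelCDF c a :=
  intervalIntegral.integral_eq_sub_of_hasDerivAt (fun s _ => hasDerivAt_gumbelCDF c s)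
    ((continuous_gumbelPDF c).intervalIntegrable a b)

lemma integrableOn_gumbelPDF_Iic {c : ℝ} (hc : 0 < c) (b : ℝ) :
    IntegrableOn (gumbelPDF c) (Iic b) := by
  refine integrableOn_Iic_of_intervalIntegral_norm_tendsto (gumbelCDF c b) b
    (fun _ => (continuous_gumbelPDF c).integrableOn_Ioc) tendsto_id ?_
  have h := (tendsto_const_nhds (x := gumbelCDF c b)).sub (tendsto_gumbelCDF_atBot hc)
  rw [sub_zero] at h
  refine h.congr fun a => ?_
  simp only [id, Real.norm_of_nonneg (gumbelPDF_nonneg hc.le _)]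
  exact (integral_gumbelPDF c a b).symm

lemma gumbelMeasure_Iic {c : ℝ} (hc : 0 < c) (b : ℝ) :
    gumbelMeasure c (Iic b) = ENNReal.ofReal (gumbelCDF c b) := by
  rw [gumbelMeasure, withDensity_apply _ measurableSet_Iic,
    ← ofReal_integral_eq_lintegral_ofReal (integrableOn_gumbelPDF_Iic hc b)
      (ae_of_all _ (gumbelPDF_nonneg hc.le)),
    integral_Iic_of_hasDerivAt_of_tendsto' (fun s _ => hasDerivAt_gumbelCDF c s)
      (integrableOn_gumbelPDF_Iic hc b) (tendsto_gumbelCDF_atBot hc), sub_zero]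

lemma gumbelMeasure_Iio {c : ℝ} (hc : 0 < c) (b : ℝ) :
    gumbelMeasure c (Iio b) = ENNReal.ofReal (gumbelCDF c b) := by
  rw [measure_congr Iio_ae_eq_Iic, gumbelMeasure_Iic hc]

lemma withDensity_gumbelCDF {d b : ℝ} (h : 0 < d + b) :
    (gumbelMeasure d).withDensity (fun s => ENNReal.ofReal (gumbelCDF b s)) =
      ENNReal.ofReal (d / (d + b)) • gumbelMeasure (d + b) := by
  have hmeas (c : ℝ) : Measurable fun s => ENNReal.ofReal (gumbelPDF c s) :=
    (continuous_gumbelPDF c).measurable.ennreal_ofReal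
  rw [gumbelMeasure, ← withDensity_mul _ (hmeas d)
    (continuous_gumbelCDF b).measurable.ennreal_ofReal,
    gumbelMeasure, ← withDensity_smul _ (hmeas _)]
  congr 1
  funext s
  simp only [Pi.mul_apply, Pi.smul_apply, smul_eq_mul]
  rw [← ENNReal.ofReal_mul' (gumbelCDF_nonneg b s),
    ← ENNReal.ofReal_mul' (gumbelPDF_nonneg h.le s)]
  congr 1
  simp only [gumbelPDF, mul_assoc, gumbelCDF_mul_gumbelCDF]
  field_simp

lemma setLIntegral_gumbelCDF_Iio {d b : ℝ} (h : 0 < d + b) (s : ℝ) :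
    ∫⁻ a in Iio s, ENNReal.ofReal (gumbelCDF b a) ∂gumbelMeasure d =
      ENNReal.ofReal (d / (d + b) * gumbelCDF (d + b) s) := by
  rw [← withDensity_apply _ measurableSet_Iio, withDensity_gumbelCDF h, Measure.smul_apply,
    gumbelMeasure_Iio h, smul_eq_mul, ENNReal.ofReal_mul' (gumbelCDF_nonneg _ _)]

def plackettLuce {n : ℕ} (c : Fin n → ℝ) : ℝ := ∏ i, c i / ∑ j ∈ Finset.Ici i, c j

lemma plackettLuce_nonneg {n : ℕ} {c : Fin n → ℝ} (hc : ∀ i, 0 ≤ c i) :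
    0 ≤ plackettLuce c :=
  Finset.prod_nonneg fun _ _ => div_nonneg (hc _) (Finset.sum_nonneg fun _ _ => hc _)

lemma plackettLuce_succ {n : ℕ} (c : Fin (n + 1) → ℝ) :
    plackettLuce c =
      c 0 / (c 0 + ∑ i : Fin n, c i.succ) * plackettLuce fun i : Fin n => c i.succ := by
  rw [plackettLuce, Fin.prod_univ_succ, ← bot_eq_zero, Finset.Ici_bot, bot_eq_zero,
    Fin.sum_univ_succ]
  simp only [Fin.sum_Ici_succ]
  rfl

lemma Fin.strictAnti_cons {α : Type*} [Preorder α] {n : ℕ} {f : Fin n → α} {a : α} :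
    StrictAnti (Fin.cons a f : Fin (n + 1) → α) ↔ (∀ j, f j < a) ∧ StrictAnti f :=
  liftFun_cons (· > ·)

lemma Fin.strictAnti_cons_and_forall_lt_iff {α : Type*} [Preorder α] {n : ℕ} {u : Fin n → α}
    {a s : α} :
    (StrictAnti (Fin.cons a u : Fin (n + 1) → α) ∧
        ∀ i, (Fin.cons a u : Fin (n + 1) → α) i < s) ↔
      a < s ∧ StrictAnti u ∧ ∀ i, u i < a := by
  simp only [Fin.strictAnti_cons, Fin.forall_fin_succ, Fin.cons_zero, Fin.cons_succ]
  constructor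
  · rintro ⟨⟨hua, hu⟩, has, -⟩
    exact ⟨has, hu, hua⟩
  · rintro ⟨has, hu, hua⟩
    exact ⟨⟨hua, hu⟩, has, fun i => (hua i).trans has⟩

lemma measurableSet_setOf_strictAnti {ι α : Type*} [Countable ι] [Preorder ι]
    [LinearOrder α] [TopologicalSpace α] [OrderClosedTopology α] [SecondCountableTopology α]
    [MeasurableSpace α] [OpensMeasurableSpace α] :
    MeasurableSet {t : ι → α | StrictAnti t} := by
  have h : {t : ι → α | StrictAnti t} = ⋂ (i) (j) (_ : i < j), {t | t j < t i} := by
    ext t; simp [StrictAnti]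
  rw [h]
  exact .iInter fun i => .iInter fun j => .iInter fun _ =>
    measurableSet_lt (measurable_pi_apply j) (measurable_pi_apply i)

lemma MeasureTheory.Measure.pi_fin_succ_apply {α : Type*} [MeasurableSpace α] {n : ℕ}
    (μ : Fin (n + 1) → Measure α) [∀ i, SigmaFinite (μ i)] {s : Set (Fin (n + 1) → α)}
    (hs : MeasurableSet s) :
    Measure.pi μ s =
      ∫⁻ a, Measure.pi (fun j => μ j.succ) {u | Fin.cons a u ∈ s} ∂μ 0 := by
  have hE := (measurePreserving_piFinSuccAbove μ 0).symm
  simp only [Fin.succAbove_zero] at hE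
  rw [← hE.measure_preimage hs.nullMeasurableSet, Measure.prod_apply (hs.preimage hE.measurable)]
  congr! 3 with a
  ext u
  simp [MeasurableEquiv.piFinSuccAbove_symm_apply, Fin.consEquiv]

theorem pi_gumbelMeasure_strictAnti_lt {n : ℕ} (c : Fin n → ℝ) (hc : ∀ i, 0 < c i)
    (s : ℝ) :
    Measure.pi (fun i => gumbelMeasure (c i)) {t | StrictAnti t ∧ ∀ i, t i < s} =
      ENNReal.ofReal (plackettLuce c * gumbelCDF (∑ i, c i) s) := by
  induction n generalizing s with
  | zero => simp [plackettLuce, gumbelCDF_zero, Subsingleton.strictAnti]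
  | succ n ih =>
    have hR : 0 ≤ plackettLuce fun i : Fin n => c i.succ :=
      plackettLuce_nonneg fun i => (hc _).le
    have hB : 0 < c 0 + ∑ i : Fin n, c i.succ :=
      add_pos_of_pos_of_nonneg (hc 0) (Finset.sum_nonneg fun i _ => (hc _).le)
    have hmeas : MeasurableSet {t : Fin (n + 1) → ℝ | StrictAnti t ∧ ∀ i, t i < s} := by
      rw [ofPred_and, ofPred_forall]
      exact measurableSet_setOf_strictAnti.inter
        (.iInter fun i => measurableSet_lt (measurable_pi_apply i) measurable_const)
    have hslice (a : ℝ) :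
        Measure.pi (fun j => gumbelMeasure (c j.succ))
            {u | Fin.cons a u ∈ {t : Fin (n + 1) → ℝ | StrictAnti t ∧ ∀ i, t i < s}} =
          (Iio s).indicator (fun a => ENNReal.ofReal (plackettLuce fun i : Fin n => c i.succ) *
            ENNReal.ofReal (gumbelCDF (∑ i : Fin n, c i.succ) a)) a := by
      simp only [mem_ofPred_eq, Fin.strictAnti_cons_and_forall_lt_iff]
      by_cases has : a < s
      · simp only [has, true_and, indicator_of_mem (show a ∈ Iio s from has)]
        rw [ih _ (fun i => hc _), ENNReal.ofReal_mul hR]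
      · simp [has]
    rw [Measure.pi_fin_succ_apply _ hmeas, lintegral_congr hslice,
      lintegral_indicator measurableSet_Iio,
      lintegral_const_mul _ (continuous_gumbelCDF _).measurable.ennreal_ofReal,
      setLIntegral_gumbelCDF_Iio hB, ← ENNReal.ofReal_mul hR, plackettLuce_succ,
      Fin.sum_univ_succ]
    congr 1
    ring

theorem pi_gumbelMeasure_strictAnti {n : ℕ} (c : Fin n → ℝ) (hc : ∀ i, 0 < c i) :
    Measure.pi (fun i => gumbelMeasure (c i)) {t | StrictAnti t} =
      ENNReal.ofReal (plackettLuce c) := by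
  let S : ℝ → Set (Fin n → ℝ) := fun s => {t | StrictAnti t ∧ ∀ i, t i < s}
  have hmono : Monotone S := fun s s' hss' t ht => ⟨ht.1, fun i => (ht.2 i).trans_le hss'⟩
  have hunion : ⋃ s, S s = {t | StrictAnti t} := by
    ext t
    refine ⟨fun ⟨_, ⟨s, rfl⟩, ht⟩ => ht.1, fun ht => ?_⟩
    obtain ⟨M, hM⟩ := (finite_range t).bddAbove
    exact mem_iUnion.2 ⟨M + 1, ht, fun i => (hM (mem_range_self i)).trans_lt (lt_add_one M)⟩
  have hlim :=
    tendsto_measure_iUnion_atTop (μ := Measure.pi fun i => gumbelMeasure (c i)) hmono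
  rw [hunion] at hlim
  refine tendsto_nhds_unique hlim ?_
  simp only [Function.comp_def, S, pi_gumbelMeasure_strictAnti_lt c hc]
  have h := (ENNReal.continuous_ofReal.tendsto _).comp
    ((tendsto_gumbelCDF_atTop (∑ i, c i)).const_mul (plackettLuce c))
  rwa [mul_one] at h

lemma ProbabilityTheory.IndepFun.ae_ne {Ω β : Type*} [MeasurableSpace Ω] {μ : Measure Ω}
    [IsFiniteMeasure μ] [MeasurableSpace β] [MeasurableEq β] {f g : Ω → β}
    (hfg : IndepFun f g μ) (hf : AEMeasurable f μ) (hg : AEMeasurable g μ)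
    [NullSingletonClass (μ.map g)] :
    ∀ᵐ ω ∂μ, f ω ≠ g ω := by
  have h : ∀ᵐ p ∂(μ.map f).prod (μ.map g), p.1 ≠ p.2 :=
    (Measure.ae_prod_iff_ae_ae measurableSet_diagonal.compl).2
      (ae_of_all _ fun a => (Measure.ae_ne _ a).mono fun _ hb => hb.symm)
  rw [← hfg.map_prod_eq_prod_map_map hf hg] at h
  exact ae_of_ae_map (hf.prodMk hg) h

lemma ProbabilityTheory.iIndepFun.ae_injective {Ω ι β : Type*} [MeasurableSpace Ω]
    {μ : Measure Ω} [IsFiniteMeasure μ] [Countable ι] [MeasurableSpace β] [MeasurableEq β]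
    {f : ι → Ω → β} (h : iIndepFun f μ) (hf : ∀ i, AEMeasurable (f i) μ)
    [∀ i, NullSingletonClass (μ.map (f i))] :
    ∀ᵐ ω ∂μ, Function.Injective fun i => f i ω := by
  refine ae_all_iff.2 fun i => ae_all_iff.2 fun j => ?_
  by_cases hij : i = j
  · exact ae_of_all _ fun _ _ => hij
  · exact ((h.indepFun hij).ae_ne (hf i) (hf j)).mono fun _ hne heq => absurd heq hne

lemma map_log_add_of_isStdGumbel {Ω : Type*} [MeasurableSpace Ω] {μ : Measure Ω}
    [IsProbabilityMeasure μ] {w : ℝ} (hw : 0 < w) {g : Ω → ℝ} (hg : IsStdGumbel μ g) :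
    μ.map (fun ω => Real.log w + g ω) = gumbelMeasure w := by
  have hmeas : Measurable fun ω => Real.log w + g ω := measurable_const.add hg.1
  refine Measure.ext_of_Iic _ _ fun a => ?_
  have hpre : (fun ω => Real.log w + g ω) ⁻¹' Iic a = {ω | g ω ≤ a - Real.log w} := by
    ext ω; simp [le_sub_iff_add_le']
  have hcdf : Real.exp (-Real.exp (-(a - Real.log w))) = gumbelCDF w a := by
    rw [gumbelCDF, neg_sub, Real.exp_sub, Real.exp_log hw, Real.exp_neg a, div_eq_mul_inv]
  rw [Measure.map_apply hmeas measurableSet_Iic, gumbelMeasure_Iic hw, hpre,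
    ← ENNReal.ofReal_toReal (measure_ne_top _ _), hg.2, hcdf]

end

theorem gumbel_plackett_luce_general {X Ω : Type*} [Fintype X]
    [MeasurableSpace Ω] (μ : Measure Ω) [IsProbabilityMeasure μ]
    (w : X → ℝ) (hw : ∀ x, 0 < w x)
    (G : X → Ω → ℝ)
    (hG : ∀ x, IsStdGumbel μ (G x))
    (hindep : ProbabilityTheory.iIndepFun
      G μ) :
    μ {ω | Function.Injective fun x => Real.log (w x) + G x ω} = 1 ∧
    ∀ y : Fin (Fintype.card X) → X, Function.Bijective y →
      (μ {ω | ∀ i j : Fin (Fintype.card X), i < j →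
          Real.log (w (y j)) + G (y j) ω < Real.log (w (y i)) + G (y i) ω}).toReal
        = ∏ i : Fin (Fintype.card X), w (y i) / ∑ j ∈ Finset.Ici i, w (y j) := by
  have hmeas (x : X) : Measurable fun ω => Real.log (w x) + G x ω := measurable_const.add (hG x).1
  have hlaw (x : X) : μ.map (fun ω => Real.log (w x) + G x ω) = gumbelMeasure (w x) :=
    map_log_add_of_isStdGumbel (hw x) (hG x)
  have hindepY : iIndepFun (fun x ω => Real.log (w x) + G x ω) μ :=
    hindep.comp (fun x t => Real.log (w x) + t) fun x => measurable_const_add _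
  refine ⟨?_, fun y hy => ?_⟩
  · have (x : X) : NullSingletonClass (μ.map fun ω => Real.log (w x) + G x ω) := by
      rw [hlaw]; infer_instance
    exact (measure_congr (ae_eq_univ.2
      (hindepY.ae_injective fun x => (hmeas x).aemeasurable))).trans measure_univ
  · have hlaw_y : μ.map (fun ω i => Real.log (w (y i)) + G (y i) ω) =
        Measure.pi fun i => gumbelMeasure (w (y i)) := by
      rw [(hindepY.precomp hy.injective).map_fun_eq_pi_map fun i => (hmeas _).aemeasurable]
      simp only [hlaw]
    have hordered : μ ((fun ω i => Real.log (w (y i)) + G (y i) ω) ⁻¹' {t | StrictAnti t}) =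
        ENNReal.ofReal (plackettLuce fun i => w (y i)) := by
      rw [← Measure.map_apply (measurable_pi_lambda _ fun i => hmeas _)
        measurableSet_setOf_strictAnti, hlaw_y, pi_gumbelMeasure_strictAnti _ fun i => hw _]
    exact (congrArg ENNReal.toReal hordered).trans
      (ENNReal.toReal_ofReal (plackettLuce_nonneg fun i => (hw (y i)).le))

/-- **Gumbel perturbation induces the Plackett–Luce ordering:** almost surely the values
`log w(x) + G_x` are pairwise distinct, and for every enumeration `(x_1, …, x_n)` of `𝒳`
the probability that `log w(x_1) + G_{x_1} > ⋯ > log w(x_n) + G_{x_n}` equals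
`∏ᵢ w(x_i) / (Σ_{j ≥ i} w(x_j))`. -/
theorem gumbel_plackett_luce {X Ω : Type*} [Fintype X] [Nonempty X]
    [MeasurableSpace Ω] (μ : Measure Ω) [IsProbabilityMeasure μ]
    (w : X → ℝ) (hw : ∀ x, 0 < w x)
    (G : X → Ω → ℝ)
    (hG : ∀ x, IsStdGumbel μ (G x))
    (hindep : ProbabilityTheory.iIndepFun
      G μ) :
    μ {ω | Function.Injective fun x => Real.log (w x) + G x ω} = 1 ∧
    ∀ y : Fin (Fintype.card X) → X, Function.Bijective y →
      (μ {ω | ∀ i j : Fin (Fintype.card X), i < j →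
          Real.log (w (y j)) + G (y j) ω < Real.log (w (y i)) + G (y i) ω}).toReal
        = ∏ i : Fin (Fintype.card X), w (y i) / ∑ j ∈ Finset.Ici i, w (y j) :=
  gumbel_plackett_luce_general μ w hw G hG hindep
end
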